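/- Let U be a normal ultrafilter on a measurable cardinal κ and let S ⊆ κ⁺⁺ be indexed by a family ⟨A_α : α ∈ S⟩ of sets in U, with a fixed finite stem s. Suppose the set U_s = S is stationary in κ⁺⁺. Then by Rowbottom's partition theorem there is a set Â ∈ U such that for every finite x ⊆ Â with min(x) > max(s), the set T_{s∪x} = {α ∈ S : x ⊆ A_α} is stationary in κ⁺⁺. -/

import Mathlib

/-- `C` is a club (closed unbounded set) in the ordinal `α`. -/
def IsClubIn (C : Set Ordinal) (α : Ordinal) : Prop :=
  C ⊆ Set.Iio α ∧ (∀ β < α, ∃ γ ∈ C, β < γ) ∧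
    ∀ β < α, 0 < β → (∀ γ < β, ∃ δ ∈ C, γ < δ ∧ δ < β) → β ∈ C

/-- U is a normal (κ-complete, diagonal-intersection-closed) ultrafilter on κ,
viewed as a family of subsets of the ordinals below κ.ord. -/
structure IsNormalUF (κ : Cardinal) (U : Set (Set Ordinal)) : Prop where
  sub : ∀ A ∈ U, A ⊆ Set.Iio κ.ord
  top : Set.Iio κ.ord ∈ U
  up : ∀ A ∈ U, ∀ B : Set Ordinal, B ⊆ Set.Iio κ.ord → A ⊆ B → B ∈ U
  inter : ∀ A ∈ U, ∀ B ∈ U, A ∩ B ∈ U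
  ultra : ∀ A : Set Ordinal, A ⊆ Set.Iio κ.ord → A ∈ U ∨ (Set.Iio κ.ord \ A) ∈ U
  complete : ∀ {ι : Type} (f : ι → Set Ordinal), Cardinal.mk ι < κ →
    (∀ i, f i ∈ U) → (Set.Iio κ.ord ∩ ⋂ i, f i) ∈ U
  normal : ∀ f : Ordinal → Set Ordinal, (∀ β < κ.ord, f β ∈ U) →
    {γ | γ < κ.ord ∧ ∀ β < γ, γ ∈ f β} ∈ U

/-!
Write `T_x = {α ∈ T | x ⊆ A α}`. Fewer than `cof κ⁺⁺` non-stationary sets cannot cover a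
stationary set, so if `T` is stationary, the `b` with `T_{b}` stationary form a set in `U`:
otherwise every `α ∈ T` would lie in some non-stationary `T_{b}`, as `A α ∈ U`. By induction on
`n`, normality then gives `H_n ∈ U` such that `T_x` is stationary for all `x ⊆ H_n` with
`|x| ≤ n`: take the diagonal intersection of the sets obtained for the `T_{b}`, and split off the
least element `b` of `x`. A nonprincipal normal ultrafilter on an infinite `κ` is countably
complete, so `⋂ₙ H_n` works for all finite `x` at once.
-/

section

open Cardinal Order Set
open scoped Ordinal

universe u

theorem IsClubIn.isSuccLimit {C : Set Ordinal} {o : Ordinal} (hC : IsClubIn C o) (ho : o ≠ 0) :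
    IsSuccLimit o := by
  rcases Ordinal.zero_or_succ_or_isSuccLimit o with rfl | ⟨β, rfl⟩ | ho
  · exact absurd rfl ho
  · obtain ⟨γ, hγC, hβγ⟩ := hC.2.1 β (lt_succ β)
    exact absurd (hC.1 hγC) (succ_le_of_lt hβγ).not_gt
  · exact ho

theorem IsClubIn.isClub_preimage {C : Set Ordinal} {o : Ordinal} (hC : IsClubIn C o) :
    IsClub ((↑) ⁻¹' C : Set (Iio o)) := by
  refine ⟨dirSupClosed_iff_of_linearOrder.2 fun d hdC ⟨δ, hδ⟩ a ha => ?_, fun a => ?_⟩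
  · by_cases had : a ∈ d
    · exact hdC had
    have hlt : ∀ e ∈ d, e < a := fun e he => (ha.1 he).lt_of_ne (ne_of_mem_of_not_mem he had)
    refine hC.2.2 a a.2 (zero_le.trans_lt (show (δ : Ordinal) < a from hlt δ hδ)) fun γ hγ => ?_
    obtain ⟨e, he, hγe⟩ : ∃ e ∈ d, (⟨γ, hγ.trans a.2⟩ : Iio o) < e := by
      simpa [upperBounds] using mt (ha.2 ·) (not_le.2 hγ)
    exact ⟨e, hdC he, hγe, hlt e he⟩
  · obtain ⟨γ, hγC, hγ⟩ := hC.2.1 a a.2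
    exact ⟨⟨γ, hC.1 hγC⟩, hγC, hγ.le⟩

theorem isClubIn_image_of_isClub {o : Ordinal} (ho : IsSuccLimit o) {t : Set (Iio o)}
    (ht : IsClub t) : IsClubIn ((↑) '' t) o := by
  refine ⟨fun _ ⟨a, _, ha⟩ => ha ▸ a.2, fun β hβ => ?_, fun β hβ hβ0 hC => ?_⟩
  · obtain ⟨a, hat, ha⟩ := ht.isCofinal ⟨succ β, ho.succ_lt hβ⟩
    exact ⟨a, mem_image_of_mem _ hat, (lt_succ β).trans_le ha⟩
  · have hlub : IsLUB {a ∈ t | (a : Ordinal) < β} ⟨β, hβ⟩ := by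
      refine ⟨fun a ha => ha.2.le, fun b hb => not_lt.1 fun hbβ => ?_⟩
      obtain ⟨_, ⟨a, hat, rfl⟩, hba, haβ⟩ := hC b hbβ
      exact (hb ⟨hat, haβ⟩).not_gt hba
    obtain ⟨_, ⟨a, hat, rfl⟩, -, haβ⟩ := hC 0 hβ0
    exact ⟨_, ht.isLUB_mem (fun a ha => ha.1) (by exact ⟨a, hat, haβ⟩) hlub, rfl⟩

theorem isStationary_preimage_iff {o : Ordinal} (ho : IsSuccLimit o) {T : Set Ordinal} :
    IsStationary ((↑) ⁻¹' T : Set (Iio o)) ↔ ∀ C, IsClubIn C o → (T ∩ C).Nonempty :=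
  ⟨fun h _ hC => (h hC.isClub_preimage).image _ |>.mono (by rintro _ ⟨a, ha, rfl⟩; exact ha),
   fun h _ ht => by
    obtain ⟨_, haT, a, hat, rfl⟩ := h _ (isClubIn_image_of_isClub ho ht)
    exact ⟨a, haT, hat⟩⟩

namespace IsNormalUF

variable {κ : Cardinal} {U : Set (Set Ordinal)} {α : Type u} [LinearOrder α] [WellFoundedLT α]

theorem Iio_diff_singleton_mem (hU : IsNormalUF κ U) (hsing : ∀ c, {c} ∉ U) (c : Ordinal) :
    Iio κ.ord \ {c} ∈ U := by
  by_cases hc : c < κ.ord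
  · exact (hU.ultra {c} (singleton_subset_iff.2 hc)).resolve_left (hsing c)
  · convert hU.top
    exact sdiff_singleton_eq_self hc

/-- A normal ultrafilter on `ω` is principal: the diagonal intersection of the sets `ω \ {n + 1}`
is `{0}`. -/
theorem aleph0_lt_of_forall_singleton_notMem (hU : IsNormalUF κ U) (hκ : ℵ₀ ≤ κ)
    (hsing : ∀ c, {c} ∉ U) : ℵ₀ < κ := by
  refine hκ.lt_of_ne fun hκω => hsing 0 ?_
  have hω : κ.ord = ω := by rw [← hκω, ord_aleph0]
  refine hU.up _ (hU.normal _ fun β _ => hU.Iio_diff_singleton_mem hsing (succ β)) _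
    (by simp [hω]) ?_
  rintro γ ⟨hγκ, hγ⟩
  rcases Ordinal.zero_or_succ_or_isSuccLimit γ with rfl | ⟨β, rfl⟩ | hlim
  · rfl
  · exact absurd rfl (hγ β (lt_succ β)).2
  · exact absurd (hω ▸ hγκ) (Ordinal.omega0_le_of_isSuccLimit hlim).not_gt

theorem inter_iInter_nat_mem (hU : IsNormalUF κ U) (hκ : ℵ₀ ≤ κ) {f : ℕ → Set Ordinal}
    (hf : ∀ n, f n ∈ U) : Iio κ.ord ∩ ⋂ n, f n ∈ U := by
  by_cases h0 : ∅ ∈ U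
  · exact hU.up ∅ h0 _ inter_subset_left (empty_subset _)
  by_cases hsing : ∀ c, {c} ∉ U
  · exact hU.complete f (by simpa using hU.aleph0_lt_of_forall_singleton_notMem hκ hsing) hf
  · obtain ⟨c, hc⟩ := not_forall_not.1 hsing
    have hcU : ∀ X ∈ U, c ∈ X := fun X hX => by_contra fun hcX =>
      h0 (inter_singleton_eq_empty.2 hcX ▸ hU.inter X hX {c} hc)
    exact hU.up {c} hc _ inter_subset_left
      (singleton_subset_iff.2 ⟨hU.sub _ hc rfl, mem_iInter.2 fun n => hcU _ (hf n)⟩)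

theorem setOf_isStationary_mem (hU : IsNormalUF κ U) (hα : Order.cof α ≠ ℵ₀)
    (hκα : Cardinal.lift.{u} κ < Order.cof α) {T : Set α} (hT : IsStationary T)
    {A : α → Set Ordinal} (hA : ∀ a ∈ T, A a ∈ U) :
    {b | b < κ.ord ∧ IsStationary {a ∈ T | b ∈ A a}} ∈ U := by
  by_contra hB
  set D := Iio κ.ord \ {b | b < κ.ord ∧ IsStationary {a ∈ T | b ∈ A a}}
  have hD : D ∈ U := (hU.ultra _ fun b hb => hb.1).resolve_left hB
  have hcover : T ⊆ ⋃ b : D, {a ∈ T | (b : Ordinal) ∈ A a} := by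
    intro a ha
    obtain ⟨b, hbA, hbD⟩ : (A a ∩ D).Nonempty := nonempty_iff_ne_empty.2 fun h =>
      hB (hU.up ∅ (h ▸ hU.inter _ (hA a ha) _ hD) _ (fun b hb => hb.1) (empty_subset _))
    exact mem_iUnion.2 ⟨⟨b, hbD⟩, ha, hbA⟩
  have hcard : Cardinal.lift.{u} #D < Cardinal.lift.{1} (Order.cof α) := by
    calc Cardinal.lift.{u} #D ≤ Cardinal.lift.{u} #(Iio κ.ord) :=
          lift_le.2 (mk_le_mk_of_subset sdiff_subset)
      _ = Cardinal.lift.{1} (Cardinal.lift.{u} κ) := by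
          rw [mk_Iio_ordinal, card_ord, lift_lift, lift_lift]
      _ < Cardinal.lift.{1} (Order.cof α) := lift_lt.2 hκα
  obtain ⟨⟨b, hbκ, hbB⟩, hb⟩ := (isStationary_iUnion_iff hα hcard).1 (hT.mono hcover)
  exact hbB ⟨hbκ, hb⟩

theorem exists_mem_forall_isStationary (hU : IsNormalUF κ U) (hα : Order.cof α ≠ ℵ₀)
    (hκα : Cardinal.lift.{u} κ < Order.cof α) (n : ℕ) {T : Set α} (hT : IsStationary T)
    {A : α → Set Ordinal} (hA : ∀ a ∈ T, A a ∈ U) :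
    ∃ H ∈ U, ∀ x : Finset Ordinal, ↑x ⊆ H → x.card ≤ n → IsStationary {a ∈ T | ↑x ⊆ A a} := by
  classical
  induction n generalizing T with
  | zero =>
    refine ⟨Iio κ.ord, hU.top, fun x _ hx => ?_⟩
    simpa [Finset.card_eq_zero.1 (Nat.le_zero.1 hx)] using hT
  | succ n ih =>
    set B := {b | b < κ.ord ∧ IsStationary {a ∈ T | b ∈ A a}}
    have hfiber : ∀ b, ∃ H ∈ U, b ∈ B → ∀ y : Finset Ordinal, ↑y ⊆ H → y.card ≤ n →
        IsStationary {a ∈ {a ∈ T | b ∈ A a} | ↑y ⊆ A a} := by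
      intro b
      by_cases hb : b ∈ B
      · obtain ⟨H, hHU, hH⟩ := ih hb.2 fun a ha => hA a ha.1
        exact ⟨H, hHU, fun _ => hH⟩
      · exact ⟨_, hU.top, fun h => absurd h hb⟩
    choose H hHU hH using hfiber
    refine ⟨B ∩ {γ | γ < κ.ord ∧ ∀ β < γ, γ ∈ H β},
      hU.inter _ (hU.setOf_isStationary_mem hα hκα hT hA) _ (hU.normal H fun β _ => hHU β),
      fun x hx hcard => ?_⟩
    induction x using Finset.induction_on_min with
    | empty => simpa using hT
    | insert b y hby _ =>
      have hby' : b ∉ y := fun hb => (hby b hb).false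
      have hyH : ↑y ⊆ H b := fun e he => (hx (by simp [he])).2.2 b (hby e he)
      have hycard : y.card ≤ n := by
        rw [Finset.card_insert_of_notMem hby'] at hcard
        omega
      convert hH b (hx (by simp)).1 y hyH hycard using 1
      ext a
      simp only [Finset.coe_insert, insert_subset_iff, mem_ofPred_eq]
      tauto

end IsNormalUF

end

theorem rowbottom_stationary_general (κ : Cardinal)
    (U : Set (Set Ordinal)) (hU : IsNormalUF κ U)
    (S : Set Ordinal)
    (hSstat : ∀ C : Set Ordinal,
      IsClubIn C (Order.succ (Order.succ κ)).ord → (S ∩ C).Nonempty)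
    (A : Ordinal → Set Ordinal) (hA : ∀ α ∈ S, A α ∈ U)
    (s : Finset Ordinal) :
    ∃ Ah ∈ U, ∀ x : Finset Ordinal, ↑x ⊆ Ah →
      (∀ a ∈ s, ∀ b ∈ x, a < b) →
      ∀ C : Set Ordinal, IsClubIn C (Order.succ (Order.succ κ)).ord →
        ({α ∈ S | ↑x ⊆ A α} ∩ C).Nonempty := by
  open Cardinal Order Set in
  set μ := succ (succ κ)
  by_cases hκ : ℵ₀ ≤ κ
  swap
  · have hμ : μ < ℵ₀ := isSuccLimit_aleph0.succ_lt (isSuccLimit_aleph0.succ_lt (not_le.1 hκ))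
    refine ⟨_, hU.top, fun x _ _ C hC => absurd (hC.isSuccLimit ?_) fun hlim => ?_⟩
    · exact ord_eq_zero.not.2 (succ_ne_zero _)
    · exact (Ordinal.omega0_le_of_isSuccLimit hlim).not_gt (ord_lt_omega0.2 hμ)
  have hκμ : κ < μ := (lt_succ κ).trans (lt_succ _)
  have hlim : IsSuccLimit μ.ord := isSuccLimit_ord (hκ.trans hκμ.le)
  have hcof : Order.cof (Iio μ.ord) = Cardinal.lift.{1} μ := by
    rw [Ordinal.cof_Iio, ← Ordinal.lift_cof, (isRegular_succ (hκ.trans (le_succ κ))).cof_ord]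
  have hα : Order.cof (Iio μ.ord) ≠ ℵ₀ := by
    rw [hcof, ne_eq, lift_eq_aleph0]
    exact (hκ.trans_lt hκμ).ne'
  have hκα : Cardinal.lift.{1} κ < Order.cof (Iio μ.ord) := hcof ▸ lift_lt.2 hκμ
  choose H hHU hH using fun n => hU.exists_mem_forall_isStationary hα hκα n
    ((isStationary_preimage_iff hlim).2 hSstat) fun a ha => hA a ha
  refine ⟨Iio κ.ord ∩ ⋂ n, H n, hU.inter_iInter_nat_mem hκ hHU, fun x hx _ => ?_⟩
  exact (isStationary_preimage_iff hlim).1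
    (hH x.card x (hx.trans (inter_subset_right.trans (iInter_subset _ _))) le_rfl)

/-- Rowbottom-style homogeneity for stationarity: given a normal ultrafilter U on a
measurable κ, a stationary set S ⊆ κ⁺⁺ indexed by sets A_α ∈ U and a fixed stem s,
there is Â ∈ U such that for every finite x ⊆ Â lying above s, the set
T_{s∪x} = {α ∈ S : x ⊆ A_α} is stationary in κ⁺⁺. -/
theorem rowbottom_stationary (κ : Cardinal) (hκ : ℵ₀ ≤ κ)
    (U : Set (Set Ordinal)) (hU : IsNormalUF κ U)
    (S : Set Ordinal)
    (hSsub : S ⊆ Set.Iio (Order.succ (Order.succ κ)).ord)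
    (hSstat : ∀ C : Set Ordinal,
      IsClubIn C (Order.succ (Order.succ κ)).ord → (S ∩ C).Nonempty)
    (A : Ordinal → Set Ordinal) (hA : ∀ α ∈ S, A α ∈ U)
    (s : Finset Ordinal) (hs : ↑s ⊆ Set.Iio κ.ord) :
    ∃ Ah ∈ U, ∀ x : Finset Ordinal, ↑x ⊆ Ah →
      (∀ a ∈ s, ∀ b ∈ x, a < b) →
      ∀ C : Set Ordinal, IsClubIn C (Order.succ (Order.succ κ)).ord →
        ({α ∈ S | ↑x ⊆ A α} ∩ C).Nonempty :=
  rowbottom_stationary_general κ U hU S hSstat A hA s
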